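/- Let π: Γ̃ → Γ be a dilated harmonic double cover of metric graphs, let F ⊂ E(Γ) be a set of h = g(Γ̃) − g(Γ) undilated edges, and let Γ∖F = Γ₁ ∪ ⋯ ∪ Γ_k be the decomposition into connected components. Then F is an ogod if and only if each Γᵢ satisfies exactly one of the following: (1) Γᵢ contains a unique connected component of the dilation subgraph Γ_dil, and g(Γᵢ) equals the genus of that component; or (2) Γᵢ has no dilated vertices or edges, g(Γᵢ) = 1, and Γᵢ has connected preimage in Γ̃. -/

import Mathlib

open scoped Classical
noncomputable section

/-- A (model of a) metric graph: a finite (multi)graph with oriented edges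
and positive edge lengths. -/
structure MetricGraph where
  V : Type
  E : Type
  [fintV : Fintype V]
  [fintE : Fintype E]
  s : E → V
  t : E → V
  len : E → ℝ
  len_pos : ∀ e, 0 < len e

attribute [instance] MetricGraph.fintV MetricGraph.fintE

namespace MetricGraph

/-- Two vertices are adjacent if some edge joins them. -/
def Adj (G : MetricGraph) (u v : G.V) : Prop :=
  ∃ e : G.E, (G.s e = u ∧ G.t e = v) ∨ (G.s e = v ∧ G.t e = u)

/-- Reachability by walks. -/
def Reach (G : MetricGraph) : G.V → G.V → Prop :=
  Relation.ReflTransGen G.Adj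

/-- A graph is connected if it is nonempty and any two vertices are joined by a walk. -/
def Connected (G : MetricGraph) : Prop :=
  Nonempty G.V ∧ ∀ u v : G.V, G.Reach u v

/-- The genus (first Betti number) of a connected graph: #E - #V + 1. -/
def genus (G : MetricGraph) : ℤ :=
  (Fintype.card G.E : ℤ) - (Fintype.card G.V : ℤ) + 1

/-- The number of connected components. -/
def numComponents (G : MetricGraph) : ℕ :=
  Nat.card (Quot G.Reach)

/-- A tree is a connected graph with #V = #E + 1. -/
def IsTree (G : MetricGraph) : Prop :=
  G.Connected ∧ Fintype.card G.E + 1 = Fintype.card G.V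

/-- A loop is an edge whose endpoints coincide. -/
def IsLoop (G : MetricGraph) (e : G.E) : Prop := G.s e = G.t e

/-- Delete a set of edges. -/
def deleteEdges (G : MetricGraph) (F : Set G.E) : MetricGraph where
  V := G.V
  E := {e : G.E // e ∉ F}
  fintV := G.fintV
  fintE := Fintype.ofFinite _
  s e := G.s e.1
  t e := G.t e.1
  len e := G.len e.1
  len_pos e := G.len_pos e.1

/-- A bridge is an edge whose deletion disconnects the graph. -/
def IsBridge (G : MetricGraph) (e : G.E) : Prop :=
  ¬ (G.deleteEdges {e}).Connected

/-- Contract a set of edges: identify the endpoints of each edge of `F` and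
remove the edges of `F`. -/
def contractEdges (G : MetricGraph) (F : Set G.E) : MetricGraph where
  V := Quot (fun u v : G.V => ∃ e ∈ F, G.s e = u ∧ G.t e = v)
  E := {e : G.E // e ∉ F}
  fintV := Fintype.ofFinite _
  fintE := Fintype.ofFinite _
  s e := Quot.mk _ (G.s e.1)
  t e := Quot.mk _ (G.t e.1)
  len e := G.len e.1
  len_pos e := G.len_pos e.1

/-- The subgraph induced on a set of vertices (with all edges joining them). -/
def inducedOn (G : MetricGraph) (S : Set G.V) : MetricGraph where
  V := {v : G.V // v ∈ S}
  E := {e : G.E // G.s e ∈ S ∧ G.t e ∈ S}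
  fintV := Fintype.ofFinite _
  fintE := Fintype.ofFinite _
  s e := ⟨G.s e.1, e.2.1⟩
  t e := ⟨G.t e.1, e.2.2⟩
  len e := G.len e.1
  len_pos e := G.len_pos e.1

/-- The connected component of a vertex, as a set of vertices. -/
def componentOf (G : MetricGraph) (v : G.V) : Set G.V := {u : G.V | G.Reach v u}

/-- The Jacobian polynomial of a metric graph: the sum, over all `g`-element
sets `C` of edges whose complement is a spanning tree, of the product of the
lengths of the edges of `C`. -/
def jacPoly (G : MetricGraph) : ℝ :=
  ∑ C : Finset G.E,
    if (C.card : ℤ) = G.genus ∧ (G.deleteEdges (↑C)).IsTree then ∏ e ∈ C, G.len e else 0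

end MetricGraph

/-- A harmonic double cover of metric graphs, encoded by the projection
together with its deck involution.  A vertex or edge downstairs is *dilated*
if its fiber is a single (involution-fixed) point; dilated edges have
half the length of their image. -/
structure DoubleCover (Gt G : MetricGraph) where
  πV : Gt.V → G.V
  πE : Gt.E → G.E
  ιV : Gt.V → Gt.V
  ιE : Gt.E → Gt.E
  ιV_invol : ∀ w, ιV (ιV w) = w
  ιE_invol : ∀ f, ιE (ιE f) = f
  πV_ι : ∀ w, πV (ιV w) = πV w
  πE_ι : ∀ f, πE (ιE f) = πE f
  s_comm : ∀ f, G.s (πE f) = πV (Gt.s f)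
  t_comm : ∀ f, G.t (πE f) = πV (Gt.t f)
  s_ι : ∀ f, Gt.s (ιE f) = ιV (Gt.s f)
  t_ι : ∀ f, Gt.t (ιE f) = ιV (Gt.t f)
  πV_surj : Function.Surjective πV
  πE_surj : Function.Surjective πE
  fiberV : ∀ w w', πV w' = πV w → w' = w ∨ w' = ιV w
  fiberE : ∀ f f', πE f' = πE f → f' = f ∨ f' = ιE f
  len_eq : ∀ f, Gt.len f = if ιE f = f then G.len (πE f) / 2 else G.len (πE f)

namespace DoubleCover

variable {Gt G : MetricGraph} (dc : DoubleCover Gt G)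

/-- A vertex of the base is dilated if it has a unique (involution-fixed) preimage. -/
def dilatedV (v : G.V) : Prop := ∃ w, dc.πV w = v ∧ dc.ιV w = w

/-- An edge of the base is dilated if it has a unique (involution-fixed) preimage. -/
def dilatedE (e : G.E) : Prop := ∃ f, dc.πE f = e ∧ dc.ιE f = f

/-- A double cover is free if it has no dilated vertices (hence no dilated edges). -/
def IsFree : Prop := ∀ v : G.V, ¬ dc.dilatedV v

/-- A double cover is dilated if it has a dilated vertex. -/
def IsDilated : Prop := ∃ v : G.V, dc.dilatedV v

/-- A double cover is edge-free if its dilation subgraph consists of isolated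
vertices only, i.e. there are no dilated edges. -/
def IsEdgeFree : Prop := ∀ e : G.E, ¬ dc.dilatedE e

/-- The dilation subgraph: the subgraph of the base consisting of all dilated
vertices and dilated edges. -/
def dilSubgraph : MetricGraph where
  V := {v : G.V // dc.dilatedV v}
  E := {e : G.E // dc.dilatedE e}
  fintV := Fintype.ofFinite _
  fintE := Fintype.ofFinite _
  s e := ⟨G.s e.1, by
    obtain ⟨f, hf, hfix⟩ := e.2
    exact ⟨Gt.s f, by rw [← hf, dc.s_comm], by rw [← dc.s_ι, hfix]⟩⟩
  t e := ⟨G.t e.1, by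
    obtain ⟨f, hf, hfix⟩ := e.2
    exact ⟨Gt.t f, by rw [← hf, dc.t_comm], by rw [← dc.t_ι, hfix]⟩⟩
  len e := G.len e.1
  len_pos e := G.len_pos e.1

/-- The number of dilated edges. -/
def md : ℕ := Nat.card {e : G.E // dc.dilatedE e}

/-- The number of dilated vertices. -/
def nd : ℕ := Nat.card {v : G.V // dc.dilatedV v}

/-- The number of connected components of the dilation subgraph. -/
def numDilComponents : ℕ := dc.dilSubgraph.numComponents

/-- The connected component of `v` in `Γ ∖ F` has connected preimage in `Γ̃ ∖ π⁻¹(F)`. -/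
def hasConnPreimage (F : Set G.E) (v : G.V) : Prop :=
  ((Gt.deleteEdges (dc.πE ⁻¹' F)).inducedOn
    {w : Gt.V | dc.πV w ∈ (G.deleteEdges F).componentOf v}).Connected

/-- An ogod (odd genus one decomposition): a set of `h = g(Γ̃) - g(Γ)` undilated
edges of the base such that every connected component of the complement has
connected preimage. -/
def IsOgod (F : Finset G.E) : Prop :=
  (F.card : ℤ) = Gt.genus - G.genus ∧
  (∀ e ∈ F, ¬ dc.dilatedE e) ∧
  ∀ v : G.V, dc.hasConnPreimage (↑F) v

/-- The rank of an ogod: the number of connected components of `Γ ∖ F`. -/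
def rank (_π : DoubleCover Gt G) (F : Finset G.E) : ℕ := (G.deleteEdges (↑F)).numComponents

/-- The Prym polynomial of a double cover. -/
def prymPoly : ℝ :=
  ∑ F : Finset G.E,
    if dc.IsOgod F then (4 : ℝ) ^ (dc.rank F - 1) * ∏ e ∈ F, G.len e else 0

end DoubleCover

namespace MetricGraph

/-- The vertex set of the connected component of `v` in `Γ ∖ F`. -/
def compV (G : MetricGraph) (F : Set G.E) (v : G.V) : Set G.V :=
  (G.deleteEdges F).componentOf v

/-- The edge set of the connected component of `v` in `Γ ∖ F`. -/
def compE (G : MetricGraph) (F : Set G.E) (v : G.V) : Set G.E :=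
  {e : G.E | e ∉ F ∧ G.s e ∈ G.compV F v ∧ G.t e ∈ G.compV F v}

/-- The genus of the connected component of `v` in `Γ ∖ F`. -/
def compGenus (G : MetricGraph) (F : Set G.E) (v : G.V) : ℤ :=
  (Nat.card (G.compE F v) : ℤ) - (Nat.card (G.compV F v) : ℤ) + 1

end MetricGraph

namespace DoubleCover

variable {Gt G : MetricGraph} (dc : DoubleCover Gt G)

/-- Adjacency within the dilation subgraph. -/
def dilAdj (u v : G.V) : Prop :=
  ∃ e : G.E, dc.dilatedE e ∧ ((G.s e = u ∧ G.t e = v) ∨ (G.s e = v ∧ G.t e = u))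

/-- Reachability within the dilation subgraph. -/
def dilReach : G.V → G.V → Prop := Relation.ReflTransGen dc.dilAdj

/-- The genus of the connected component of the dilation subgraph containing
the dilated vertex `w`. -/
def dilCompGenus (w : G.V) : ℤ :=
  (Nat.card ({e : G.E | dc.dilatedE e ∧ G.s e ∈ {u : G.V | dc.dilReach w u}}) : ℤ)
    - (Nat.card ({u : G.V | dc.dilReach w u}) : ℤ) + 1

/-- Condition (1) of Lemma `lemma:ogods`: the component of `v` in `Γ ∖ F`
contains a unique connected component of the dilation subgraph, and its genus
equals the genus of that component. -/
def ogodCondDil (F : Set G.E) (v : G.V) : Prop :=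
  ∃ w : G.V, dc.dilatedV w ∧ w ∈ G.compV F v ∧
    (∀ w' : G.V, dc.dilatedV w' → w' ∈ G.compV F v → dc.dilReach w w') ∧
    G.compGenus F v = dc.dilCompGenus w

/-- Condition (2) of Lemma `lemma:ogods`: the component of `v` in `Γ ∖ F` has no
dilated vertices or edges, has genus one, and has connected preimage in `Γ̃`. -/
def ogodCondFree (F : Set G.E) (v : G.V) : Prop :=
  (∀ u ∈ G.compV F v, ¬ dc.dilatedV u) ∧
  (∀ e ∈ G.compE F v, ¬ dc.dilatedE e) ∧
  G.compGenus F v = 1 ∧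
  dc.hasConnPreimage F v

end DoubleCover

/-!
For a component `C` of `Γ ∖ F` with undilated vertices `V_u(C)` and undilated edges `E_u(C)`, let
`ε(C) = #E_u(C) - #V_u(C)`. Counting fibres of `π` shows that `g(Γ̃) - g(Γ) = #E_u(Γ) - #V_u(Γ)`,
so `#F = h` says exactly that `∑_C ε(C) = 0`. If the preimage of `C` is connected, contracting its
fixed edges leaves a connected graph with `2 #E_u(C)` edges and at least `2 #V_u(C) + k` vertices,
`k` being the number of dilation components met by `C`; hence `2 ε(C) ≥ k - 1`. Therefore every
`ε(C)` vanishes and `k ≤ 1`, and `g(C) = ε(C) + 1` if `k = 0`, while `g(C) = ε(C) + g(D)` if `C`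
meets the single dilation component `D`. Conversely, a component containing a dilated vertex has
connected preimage, because every lift of a path ending at that vertex ends at its unique preimage.
-/

namespace MetricGraph

variable {G : MetricGraph}

theorem adj_comm {u v : G.V} : G.Adj u v ↔ G.Adj v u :=
  ⟨fun ⟨e, h⟩ => ⟨e, h.symm⟩, fun ⟨e, h⟩ => ⟨e, h.symm⟩⟩

theorem Reach.symm {u v : G.V} (h : G.Reach u v) : G.Reach v u :=
  have : Std.Symm G.Adj := ⟨fun _ _ => adj_comm.1⟩
  Std.Symm.symm (r := Relation.ReflTransGen G.Adj) _ _ h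

theorem adj_deleteEdges {F : Set G.E} {u v : G.V} :
    (G.deleteEdges F).Adj u v ↔ ∃ e ∉ F, (G.s e = u ∧ G.t e = v) ∨ (G.s e = v ∧ G.t e = u) :=
  ⟨fun ⟨e, h⟩ => ⟨e.1, e.2, h⟩, fun ⟨e, he, h⟩ => ⟨⟨e, he⟩, h⟩⟩

theorem compV_eq_compV_iff {F : Set G.E} {u v : G.V} :
    G.compV F u = G.compV F v ↔ u ∈ G.compV F v := by
  refine ⟨fun h => h ▸ Relation.ReflTransGen.refl, fun h => Set.ext fun x => ?_⟩
  exact ⟨fun hx => Relation.ReflTransGen.trans h hx, fun hx => (Reach.symm h).trans hx⟩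

theorem mem_compE_iff {F : Set G.E} {v : G.V} {e : G.E} :
    e ∈ G.compE F v ↔ e ∉ F ∧ G.s e ∈ G.compV F v :=
  ⟨fun h => ⟨h.1, h.2.1⟩, fun h => ⟨h.1, h.2, Relation.ReflTransGen.tail h.2
    (adj_deleteEdges.2 ⟨e, h.1, Or.inl ⟨rfl, rfl⟩⟩)⟩⟩

theorem Reach.inducedOn {S : Set G.V} (hS : ∀ a b, G.Adj a b → a ∈ S → b ∈ S) {a b : G.V}
    (h : G.Reach a b) (ha : a ∈ S) (hb : b ∈ S) : (G.inducedOn S).Reach ⟨a, ha⟩ ⟨b, hb⟩ := by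
  induction h using Relation.ReflTransGen.head_induction_on with
  | refl => exact .refl
  | head hac _ ih =>
    obtain ⟨e, hends⟩ := hac
    have hc := hS _ _ ⟨e, hends⟩ ha
    refine .head ⟨⟨e, ?_, ?_⟩, ?_⟩ (ih hc)
    all_goals rcases hends with ⟨rfl, rfl⟩ | ⟨rfl, rfl⟩
    all_goals first | assumption | exact Or.inl ⟨rfl, rfl⟩ | exact Or.inr ⟨rfl, rfl⟩

theorem toRel_range_sym2 (G : MetricGraph) :
    Sym2.ToRel (Set.range fun e => s(G.s e, G.t e)) = G.Adj := by
  ext u v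
  simp only [Sym2.toRel_prop, Set.mem_range, Sym2.eq_iff, Adj]

theorem Connected.card_V_le_card_E_add_one (hG : G.Connected) :
    Nat.card G.V ≤ Nat.card G.E + 1 := by
  let S := Set.range fun e => s(G.s e, G.t e)
  have hconn : (SimpleGraph.fromEdgeSet S).Connected := by
    have := hG.1
    refine ⟨fun u v => ?_⟩
    rw [SimpleGraph.reachable_fromEdgeSet_eq_reflTransGen_toRel, toRel_range_sym2]
    exact hG.2 u v
  have hedges : Nat.card (SimpleGraph.fromEdgeSet S).edgeSet ≤ Nat.card G.E :=
    calc Nat.card (SimpleGraph.fromEdgeSet S).edgeSet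
        ≤ Nat.card S := by
          rw [SimpleGraph.edgeSet_fromEdgeSet]
          exact Nat.card_mono (Set.toFinite _) Set.sdiff_subset
      _ ≤ Nat.card G.E := Finite.card_range_le _
  have := hconn.card_vert_le_card_edgeSet_add_one
  omega

theorem Reach.map_contractEdges (K : Set G.E) {u v : G.V} (h : G.Reach u v) :
    (G.contractEdges K).Reach (Quot.mk _ u) (Quot.mk _ v) := by
  induction h with
  | refl => exact .refl
  | tail _ huv ih =>
    obtain ⟨e, he⟩ := huv
    refine ih.trans ?_
    by_cases heK : e ∈ K
    · have : Quot.mk (fun u v => ∃ e ∈ K, G.s e = u ∧ G.t e = v) (G.s e) = Quot.mk _ (G.t e) :=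
        Quot.sound ⟨e, heK, rfl, rfl⟩
      rcases he with ⟨rfl, rfl⟩ | ⟨rfl, rfl⟩ <;> rw [this] <;> exact .refl
    · exact .single ⟨(⟨e, heK⟩ : (G.contractEdges K).E), by
        rcases he with ⟨rfl, rfl⟩ | ⟨rfl, rfl⟩
        exacts [Or.inl ⟨rfl, rfl⟩, Or.inr ⟨rfl, rfl⟩]⟩

theorem Connected.contractEdges (hG : G.Connected) (K : Set G.E) :
    (G.contractEdges K).Connected := by
  obtain ⟨⟨v⟩, hreach⟩ := hG
  refine ⟨⟨Quot.mk _ v⟩, fun a b => ?_⟩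
  induction a using Quot.ind
  induction b using Quot.ind
  exact (hreach _ _).map_contractEdges K

end MetricGraph

section Fibres

variable {α β : Type} [Fintype α] {π : α → β} {ι : α → α}

theorem card_fiber_of_involutive (hι : Function.Involutive ι) (hπι : ∀ a, π (ι a) = π a)
    (hsurj : Function.Surjective π) (hfib : ∀ a a', π a' = π a → a' = a ∨ a' = ι a) (b : β) :
    (Finset.univ.filter (π · = b)).card = 1 + if ∃ a, π a = b ∧ ι a = a then 0 else 1 := by
  obtain ⟨a, rfl⟩ := hsurj b
  have hfiber : Finset.univ.filter (π · = π a) = {a, ι a} := by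
    ext a'
    simp only [Finset.mem_filter, Finset.mem_univ, true_and, Finset.mem_insert,
      Finset.mem_singleton]
    exact ⟨hfib a a', by rintro (rfl | rfl); exacts [rfl, hπι a]⟩
  have hfixed : (∃ a', π a' = π a ∧ ι a' = a') ↔ ι a = a := by
    refine ⟨fun ⟨a', ha', hfix⟩ => ?_, fun h => ⟨a, rfl, h⟩⟩
    rcases hfib a a' ha' with rfl | rfl
    · exact hfix
    · rwa [hι a, eq_comm] at hfix
  rw [hfiber]
  split_ifs with h
  · simp [hfixed.1 h]
  · exact Finset.card_pair fun h' => h (hfixed.2 h'.symm)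

theorem ncard_preimage_of_involutive [Fintype β] (hι : Function.Involutive ι)
    (hπι : ∀ a, π (ι a) = π a) (hsurj : Function.Surjective π)
    (hfib : ∀ a a', π a' = π a → a' = a ∨ a' = ι a) (C : Set β) :
    (π ⁻¹' C).ncard = C.ncard + (C ∩ {b | ¬ ∃ a, π a = b ∧ ι a = a}).ncard := by
  rw [Set.ncard_eq_toFinset_card', Set.ncard_eq_toFinset_card', Set.ncard_eq_toFinset_card',
    Finset.card_eq_sum_card_fiberwise (f := π) (t := C.toFinset) (by intro a; simp)]
  calc ∑ b ∈ C.toFinset, {a ∈ (π ⁻¹' C).toFinset | π a = b}.card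
      = ∑ b ∈ C.toFinset, (1 + if ∃ a, π a = b ∧ ι a = a then 0 else 1) := by
        refine Finset.sum_congr rfl fun b hb => ?_
        rw [← card_fiber_of_involutive hι hπι hsurj hfib b]
        congr 1
        ext a
        simp only [Set.mem_toFinset] at hb
        simp only [Finset.mem_filter, Set.mem_toFinset, Set.mem_preimage, Finset.mem_univ,
          true_and, and_iff_right_iff_imp]
        rintro rfl
        exact hb
    _ = _ := by
        rw [Finset.sum_add_distrib, Finset.sum_const, smul_eq_mul, mul_one, Finset.sum_ite,
          Finset.sum_const_zero, Finset.sum_const, smul_eq_mul, mul_one, zero_add]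
        congr 2
        ext b
        simp

end Fibres

theorem Set.ncard_eq_sum_ncard_inter_preimage {α β : Type} [Fintype α] [DecidableEq β]
    (f : α → β) (s : Set α) (t : Finset β) (h : ∀ a ∈ s, f a ∈ t) :
    s.ncard = ∑ b ∈ t, (s ∩ f ⁻¹' {b}).ncard := by
  simp only [Set.ncard_eq_toFinset_card']
  rw [Finset.card_eq_sum_card_fiberwise (f := f) (t := t) fun a ha => h a (by simpa using ha)]
  refine Finset.sum_congr rfl fun b _ => congrArg Finset.card ?_
  ext a
  simp

namespace DoubleCover

variable {Gt G : MetricGraph} (dc : DoubleCover Gt G)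

theorem dilatedE_πE_iff (f : Gt.E) : dc.dilatedE (dc.πE f) ↔ dc.ιE f = f := by
  refine ⟨fun ⟨f', hf', hfix⟩ => ?_, fun h => ⟨f, rfl, h⟩⟩
  rcases dc.fiberE f' f hf'.symm with rfl | rfl
  · exact hfix
  · rw [dc.ιE_invol, hfix]

theorem ncard_preimage_πV (C : Set G.V) :
    (dc.πV ⁻¹' C).ncard = C.ncard + (C ∩ {v | ¬ dc.dilatedV v}).ncard :=
  ncard_preimage_of_involutive dc.ιV_invol dc.πV_ι dc.πV_surj dc.fiberV C

theorem ncard_preimage_πE (S : Set G.E) :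
    (dc.πE ⁻¹' S).ncard = S.ncard + (S ∩ {e | ¬ dc.dilatedE e}).ncard :=
  ncard_preimage_of_involutive dc.ιE_invol dc.πE_ι dc.πE_surj dc.fiberE S

theorem ncard_preimage_πV_of_undilated {C : Set G.V} (hC : ∀ u ∈ C, ¬ dc.dilatedV u) :
    (dc.πV ⁻¹' C).ncard = 2 * C.ncard := by
  rw [dc.ncard_preimage_πV, Set.inter_eq_left.2 (show C ⊆ {u | ¬ dc.dilatedV u} from hC), two_mul]

theorem ncard_preimage_πE_of_undilated {S : Set G.E} (hS : ∀ e ∈ S, ¬ dc.dilatedE e) :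
    (dc.πE ⁻¹' S).ncard = 2 * S.ncard := by
  rw [dc.ncard_preimage_πE, Set.inter_eq_left.2 (show S ⊆ {e | ¬ dc.dilatedE e} from hS), two_mul]

theorem genus_sub_genus :
    Gt.genus - G.genus =
      ({e : G.E | ¬ dc.dilatedE e}.ncard : ℤ) - {v : G.V | ¬ dc.dilatedV v}.ncard := by
  have hV := dc.ncard_preimage_πV Set.univ
  have hE := dc.ncard_preimage_πE Set.univ
  simp only [Set.preimage_univ, Set.ncard_univ, Set.univ_inter, Nat.card_eq_fintype_card] at hV hE
  simp only [MetricGraph.genus, hV, hE]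
  push_cast
  ring

theorem dilatedV_s {e : G.E} (h : dc.dilatedE e) : dc.dilatedV (G.s e) := by
  obtain ⟨f, rfl, hfix⟩ := h
  exact ⟨Gt.s f, (dc.s_comm f).symm, by rw [← dc.s_ι, hfix]⟩

theorem dilatedV_t {e : G.E} (h : dc.dilatedE e) : dc.dilatedV (G.t e) := by
  obtain ⟨f, rfl, hfix⟩ := h
  exact ⟨Gt.t f, (dc.t_comm f).symm, by rw [← dc.t_ι, hfix]⟩

theorem dilAdj_comm {u v : G.V} : dc.dilAdj u v ↔ dc.dilAdj v u :=
  ⟨fun ⟨e, he, h⟩ => ⟨e, he, h.symm⟩, fun ⟨e, he, h⟩ => ⟨e, he, h.symm⟩⟩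

theorem dilReach.symm {u v : G.V} (h : dc.dilReach u v) : dc.dilReach v u :=
  have : Std.Symm dc.dilAdj := ⟨fun _ _ => dc.dilAdj_comm.1⟩
  Std.Symm.symm (r := Relation.ReflTransGen dc.dilAdj) _ _ h

theorem dilatedV_of_dilReach {u v : G.V} (hu : dc.dilatedV u) (h : dc.dilReach u v) :
    dc.dilatedV v := by
  induction h with
  | refl => exact hu
  | tail _ hadj _ =>
    obtain ⟨e, he, ⟨-, rfl⟩ | ⟨rfl, -⟩⟩ := hadj
    exacts [dc.dilatedV_t he, dc.dilatedV_s he]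

theorem reach_of_dilReach {F : Set G.E} (hF : ∀ e ∈ F, ¬ dc.dilatedE e) {u v : G.V}
    (h : dc.dilReach u v) : (G.deleteEdges F).Reach u v := by
  induction h with
  | refl => exact .refl
  | tail _ hadj ih =>
    obtain ⟨e, he, hends⟩ := hadj
    exact ih.tail ⟨⟨e, fun heF => hF e heF he⟩, hends⟩

theorem adj_πV {F : Set G.E} {w w' : Gt.V} (h : (Gt.deleteEdges (dc.πE ⁻¹' F)).Adj w w') :
    (G.deleteEdges F).Adj (dc.πV w) (dc.πV w') := by
  obtain ⟨f, hf, hends⟩ := MetricGraph.adj_deleteEdges.1 h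
  refine MetricGraph.adj_deleteEdges.2 ⟨dc.πE f, hf, ?_⟩
  rcases hends with ⟨rfl, rfl⟩ | ⟨rfl, rfl⟩
  exacts [Or.inl ⟨dc.s_comm f, dc.t_comm f⟩, Or.inr ⟨dc.s_comm f, dc.t_comm f⟩]

theorem exists_lift_adj {F : Set G.E} {w : Gt.V} {u : G.V}
    (h : (G.deleteEdges F).Adj (dc.πV w) u) :
    ∃ w', dc.πV w' = u ∧ (Gt.deleteEdges (dc.πE ⁻¹' F)).Adj w w' := by
  simp only [MetricGraph.adj_deleteEdges] at h ⊢
  obtain ⟨e, he, hends⟩ := h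
  obtain ⟨f, rfl⟩ := dc.πE_surj e
  rcases hends with ⟨hs, rfl⟩ | ⟨rfl, ht⟩
  · rw [dc.s_comm] at hs
    rcases dc.fiberV (Gt.s f) w hs.symm with rfl | rfl
    · exact ⟨Gt.t f, (dc.t_comm f).symm, f, he, Or.inl ⟨rfl, rfl⟩⟩
    · exact ⟨Gt.t (dc.ιE f), by rw [← dc.t_comm, dc.πE_ι], dc.ιE f, by rwa [Set.mem_preimage,
        dc.πE_ι], Or.inl ⟨dc.s_ι f, rfl⟩⟩
  · rw [dc.t_comm] at ht
    rcases dc.fiberV (Gt.t f) w ht.symm with rfl | rfl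
    · exact ⟨Gt.s f, (dc.s_comm f).symm, f, he, Or.inr ⟨rfl, rfl⟩⟩
    · exact ⟨Gt.s (dc.ιE f), by rw [← dc.s_comm, dc.πE_ι], dc.ιE f, by rwa [Set.mem_preimage,
        dc.πE_ι], Or.inr ⟨rfl, dc.t_ι f⟩⟩

theorem exists_lift_reach {F : Set G.E} {w : Gt.V} {u : G.V}
    (h : (G.deleteEdges F).Reach (dc.πV w) u) :
    ∃ w', dc.πV w' = u ∧ (Gt.deleteEdges (dc.πE ⁻¹' F)).Reach w w' := by
  induction h with
  | refl => exact ⟨w, rfl, .refl⟩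
  | tail _ hadj ih =>
    obtain ⟨w₁, rfl, hw₁⟩ := ih
    obtain ⟨w₂, rfl, hw₂⟩ := dc.exists_lift_adj hadj
    exact ⟨w₂, rfl, hw₁.tail hw₂⟩

theorem hasConnPreimage_of_dilatedV {F : Set G.E} {v z : G.V} (hz : z ∈ G.compV F v)
    (hzd : dc.dilatedV z) : dc.hasConnPreimage F v := by
  obtain ⟨w₀, rfl, hfix⟩ := hzd
  have hclosed : ∀ a b, (Gt.deleteEdges (dc.πE ⁻¹' F)).Adj a b →
      a ∈ {w | dc.πV w ∈ (G.deleteEdges F).componentOf v} →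
      b ∈ {w | dc.πV w ∈ (G.deleteEdges F).componentOf v} :=
    fun _ _ hab ha => Relation.ReflTransGen.tail ha (dc.adj_πV hab)
  have hreach : ∀ a : {w | dc.πV w ∈ (G.deleteEdges F).componentOf v},
      ((Gt.deleteEdges (dc.πE ⁻¹' F)).inducedOn _).Reach a ⟨w₀, hz⟩ := by
    rintro ⟨a, ha⟩
    obtain ⟨w', hw', hreach⟩ :=
      dc.exists_lift_reach ((MetricGraph.Reach.symm ha).trans hz : (G.deleteEdges F).Reach _ _)
    obtain rfl : w' = w₀ := by
      rcases dc.fiberV w₀ w' hw' with h | h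
      · exact h
      · rw [h, hfix]
    exact hreach.inducedOn hclosed ha hz
  exact ⟨⟨⟨w₀, hz⟩⟩, fun a b => (hreach a).trans (hreach b).symm⟩

abbrev compPreimage (F : Set G.E) (v : G.V) : MetricGraph :=
  (Gt.deleteEdges (dc.πE ⁻¹' F)).inducedOn {w | dc.πV w ∈ (G.deleteEdges F).componentOf v}

def fixedEdges (F : Set G.E) (v : G.V) : Set (dc.compPreimage F v).E :=
  {f | dc.ιE f.1.1 = f.1.1}

theorem card_contract_fixedEdges_E (F : Set G.E) (v : G.V) :
    Nat.card ((dc.compPreimage F v).contractEdges (dc.fixedEdges F v)).E =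
      2 * (G.compE F v ∩ {e | ¬ dc.dilatedE e}).ncard := by
  rw [← dc.ncard_preimage_πE_of_undilated fun _ he => he.2, ← Nat.card_coe_set_eq]
  refine Nat.card_congr
    { toFun := fun f => ⟨f.1.1.1, ⟨f.1.1.2, ?_, ?_⟩, (dc.dilatedE_πE_iff _).not.2 f.2⟩
      invFun := fun f => ⟨⟨⟨f.1, f.2.1.1⟩, ?_, ?_⟩, (dc.dilatedE_πE_iff _).not.1 f.2.2⟩
      left_inv := fun _ => rfl
      right_inv := fun _ => rfl }
  · rw [dc.s_comm]; exact f.1.2.1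
  · rw [dc.t_comm]; exact f.1.2.2
  · show dc.πV (Gt.s f.1) ∈ (G.deleteEdges F).componentOf v
    rw [← dc.s_comm]; exact f.2.1.2.1
  · show dc.πV (Gt.t f.1) ∈ (G.deleteEdges F).componentOf v
    rw [← dc.t_comm]; exact f.2.1.2.2

theorem eq_or_dilReach_of_mk_eq {F : Set G.E} {v : G.V} {a b : (dc.compPreimage F v).V}
    (h : (Quot.mk _ a : ((dc.compPreimage F v).contractEdges (dc.fixedEdges F v)).V) =
      Quot.mk _ b) :
    a = b ∨ dc.dilatedV (dc.πV a.1) ∧ dc.dilReach (dc.πV a.1) (dc.πV b.1) := by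
  have hgen := Quot.eqvGen_exact h
  clear h
  induction hgen with
  | rel a b hab =>
    obtain ⟨f, hfix, rfl, rfl⟩ := hab
    have hd : dc.dilatedE (dc.πE f.1.1) := (dc.dilatedE_πE_iff _).2 hfix
    refine Or.inr ⟨?_, .single ⟨_, hd, Or.inl ⟨dc.s_comm _, dc.t_comm _⟩⟩⟩
    exact dc.s_comm f.1.1 ▸ dc.dilatedV_s hd
  | refl => exact Or.inl rfl
  | symm a b _ ih =>
    rcases ih with rfl | ⟨hd, hr⟩
    · exact Or.inl rfl
    · exact Or.inr ⟨dc.dilatedV_of_dilReach hd hr, hr.symm⟩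
  | trans a b c _ _ ih₁ ih₂ =>
    rcases ih₁ with rfl | ⟨hd, hr⟩
    · exact ih₂
    rcases ih₂ with rfl | ⟨-, hr'⟩
    · exact Or.inr ⟨hd, hr⟩
    · exact Or.inr ⟨hd, Relation.ReflTransGen.trans hr hr'⟩

/-- Both lifts of every undilated vertex of the component survive the contraction, and so does
the fixed lift of each vertex of `D`. -/
theorem two_mul_ncard_add_card_le_card_contract_V (F : Set G.E) (v : G.V) (D : Finset G.V)
    (hD : ∀ x ∈ D, dc.dilatedV x ∧ x ∈ G.compV F v)
    (hDpair : ∀ x ∈ D, ∀ y ∈ D, dc.dilReach x y → x = y) :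
    2 * (G.compV F v ∩ {u | ¬ dc.dilatedV u}).ncard + D.card ≤
      Nat.card ((dc.compPreimage F v).contractEdges (dc.fixedEdges F v)).V := by
  choose lift hlift hfix using fun x : D => (hD x x.2).1
  let A := {a : (dc.compPreimage F v).V // ¬ dc.dilatedV (dc.πV a.1)}
  have hA : Nat.card A = 2 * (G.compV F v ∩ {u | ¬ dc.dilatedV u}).ncard := by
    rw [← dc.ncard_preimage_πV_of_undilated fun _ hu => hu.2, ← Nat.card_coe_set_eq]
    exact Nat.card_congr (Equiv.subtypeSubtypeEquivSubtypeInter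
      (fun w => dc.πV w ∈ G.compV F v) fun w => ¬ dc.dilatedV (dc.πV w))
  let g : A ⊕ D → ((dc.compPreimage F v).contractEdges (dc.fixedEdges F v)).V :=
    Sum.elim (fun a => Quot.mk _ a.1) fun x =>
      Quot.mk _ ⟨lift x, show dc.πV (lift x) ∈ G.compV F v from (hlift x).symm ▸ (hD x x.2).2⟩
  have hg : Function.Injective g := by
    refine Function.Injective.sumElim (fun a b hab => ?_) (fun x y hxy => ?_) fun a x hax => ?_
    · rcases dc.eq_or_dilReach_of_mk_eq hab with h | ⟨hd, -⟩
      exacts [Subtype.ext h, absurd hd a.2]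
    · rcases dc.eq_or_dilReach_of_mk_eq hxy with h | ⟨-, hr⟩
      · exact Subtype.ext <| (hlift x).symm.trans <|
          (congrArg (dc.πV ∘ Subtype.val) h).trans (hlift y)
      · rw [hlift, hlift] at hr
        exact Subtype.ext (hDpair x x.2 y y.2 hr)
    · rcases dc.eq_or_dilReach_of_mk_eq hax with h | ⟨hd, -⟩
      · exact a.2 (h ▸ (hlift x).symm ▸ (hD x x.2).1)
      · exact a.2 hd
  calc 2 * (G.compV F v ∩ {u | ¬ dc.dilatedV u}).ncard + D.card = Nat.card (A ⊕ D) := by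
        rw [Nat.card_sum, hA, Nat.card_eq_fintype_card, Fintype.card_coe]
    _ ≤ _ := Nat.card_le_card_of_injective g hg

theorem two_mul_ncard_add_card_le (F : Set G.E) (v : G.V) (hconn : dc.hasConnPreimage F v)
    (D : Finset G.V) (hD : ∀ x ∈ D, dc.dilatedV x ∧ x ∈ G.compV F v)
    (hDpair : ∀ x ∈ D, ∀ y ∈ D, dc.dilReach x y → x = y) :
    2 * (G.compV F v ∩ {u | ¬ dc.dilatedV u}).ncard + D.card ≤
      2 * (G.compE F v ∩ {e | ¬ dc.dilatedE e}).ncard + 1 := by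
  have hcontr := ((show (dc.compPreimage F v).Connected from hconn).contractEdges
    (dc.fixedEdges F v)).card_V_le_card_E_add_one
  rw [dc.card_contract_fixedEdges_E] at hcontr
  exact (dc.two_mul_ncard_add_card_le_card_contract_V F v D hD hDpair).trans hcontr

def excess (F : Set G.E) (C : Set G.V) : ℤ :=
  ({e | e ∉ F ∧ G.s e ∈ C ∧ ¬ dc.dilatedE e}.ncard : ℤ) - (C ∩ {u | ¬ dc.dilatedV u}).ncard

theorem excess_compV (F : Set G.E) (v : G.V) :
    dc.excess F (G.compV F v) = ((G.compE F v ∩ {e | ¬ dc.dilatedE e}).ncard : ℤ)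
      - (G.compV F v ∩ {u | ¬ dc.dilatedV u}).ncard := by
  unfold excess
  congr 3
  ext e
  simp only [Set.mem_ofPred_eq, Set.mem_inter_iff, MetricGraph.mem_compE_iff, and_assoc]

theorem excess_nonneg {F : Set G.E} {v : G.V} (hconn : dc.hasConnPreimage F v) :
    0 ≤ dc.excess F (G.compV F v) := by
  have := dc.two_mul_ncard_add_card_le F v hconn ∅ (by simp) (by simp)
  rw [Finset.card_empty] at this
  rw [excess_compV]
  omega

theorem dilReach_of_excess_eq_zero {F : Set G.E} {v x y : G.V} (hconn : dc.hasConnPreimage F v)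
    (h0 : dc.excess F (G.compV F v) = 0) (hx : dc.dilatedV x) (hxC : x ∈ G.compV F v)
    (hy : dc.dilatedV y) (hyC : y ∈ G.compV F v) : dc.dilReach x y := by
  by_contra hxy
  have hne : x ≠ y := by rintro rfl; exact hxy .refl
  have := dc.two_mul_ncard_add_card_le F v hconn {x, y}
    (by simp only [Finset.mem_insert, Finset.mem_singleton]; rintro _ (rfl | rfl) <;> tauto)
    (by
      simp only [Finset.mem_insert, Finset.mem_singleton]
      rintro _ (rfl | rfl) _ (rfl | rfl) h
      exacts [rfl, absurd h hxy, absurd h.symm hxy, rfl])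
  rw [Finset.card_pair hne] at this
  rw [excess_compV] at h0
  omega

theorem sum_excess {F : Set G.E} (hcard : (F.ncard : ℤ) = Gt.genus - G.genus)
    (hundil : ∀ e ∈ F, ¬ dc.dilatedE e) :
    ∑ C ∈ Finset.univ.image (G.compV F), dc.excess F C = 0 := by
  have hfibre : ∀ C ∈ Finset.univ.image (G.compV F), dc.excess F C =
      ({e | e ∉ F ∧ ¬ dc.dilatedE e} ∩ (G.compV F ∘ G.s) ⁻¹' {C}).ncard
        - ({u | ¬ dc.dilatedV u} ∩ G.compV F ⁻¹' {C}).ncard := by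
    simp only [Finset.mem_image, Finset.mem_univ, true_and]
    rintro _ ⟨v, rfl⟩
    unfold excess
    congr 3 <;> ext <;>
      simp only [Set.mem_inter_iff, Set.mem_ofPred_eq, Set.mem_preimage, Function.comp_apply,
        Set.mem_singleton_iff, MetricGraph.compV_eq_compV_iff] <;>
      tauto
  rw [Finset.sum_congr rfl hfibre, Finset.sum_sub_distrib, ← Nat.cast_sum, ← Nat.cast_sum,
    ← Set.ncard_eq_sum_ncard_inter_preimage _ _ _ (by simp),
    ← Set.ncard_eq_sum_ncard_inter_preimage _ _ _ (by simp)]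
  have hsplit := Set.ncard_inter_add_ncard_sdiff_eq_ncard {e | ¬ dc.dilatedE e} F
  rw [Set.inter_eq_right.2 (show F ⊆ {e | ¬ dc.dilatedE e} from hundil)] at hsplit
  have hdiff : {e | ¬ dc.dilatedE e} \ F = {e | e ∉ F ∧ ¬ dc.dilatedE e} := by
    ext e; simp [and_comm]
  rw [hdiff] at hsplit
  have := dc.genus_sub_genus
  omega

theorem excess_eq_zero {F : Set G.E} (hcard : (F.ncard : ℤ) = Gt.genus - G.genus)
    (hundil : ∀ e ∈ F, ¬ dc.dilatedE e) (hconn : ∀ v, dc.hasConnPreimage F v) (v : G.V) :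
    dc.excess F (G.compV F v) = 0 := by
  have hnonneg : ∀ C ∈ Finset.univ.image (G.compV F), 0 ≤ dc.excess F C := by
    simp only [Finset.mem_image, Finset.mem_univ, true_and]
    rintro _ ⟨u, rfl⟩
    exact dc.excess_nonneg (hconn u)
  exact (Finset.sum_eq_zero_iff_of_nonneg hnonneg).1 (dc.sum_excess hcard hundil) _
    (Finset.mem_image_of_mem _ (Finset.mem_univ v))

theorem compGenus_eq_excess_add (F : Set G.E) (v : G.V) :
    G.compGenus F v = dc.excess F (G.compV F v) + (G.compE F v ∩ {e | dc.dilatedE e}).ncard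
      - (G.compV F v ∩ {u | dc.dilatedV u}).ncard + 1 := by
  have hE := Set.ncard_inter_add_ncard_sdiff_eq_ncard (G.compE F v) {e | dc.dilatedE e}
  have hV := Set.ncard_inter_add_ncard_sdiff_eq_ncard (G.compV F v) {u | dc.dilatedV u}
  rw [Set.sdiff_eq, Set.compl_ofPred] at hE hV
  simp only [MetricGraph.compGenus, excess_compV, Nat.card_coe_set_eq]
  omega

theorem compGenus_eq_one {F : Set G.E} {v : G.V} (h0 : dc.excess F (G.compV F v) = 0)
    (hfree : ∀ u ∈ G.compV F v, ¬ dc.dilatedV u) : G.compGenus F v = 1 := by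
  have hV : G.compV F v ∩ {u | dc.dilatedV u} = ∅ :=
    Set.eq_empty_of_forall_notMem fun u hu => hfree u hu.1 hu.2
  have hE : G.compE F v ∩ {e | dc.dilatedE e} = ∅ :=
    Set.eq_empty_of_forall_notMem fun e he => hfree _ he.1.2.1 (dc.dilatedV_s he.2)
  rw [dc.compGenus_eq_excess_add, hV, hE, h0]
  simp

theorem compGenus_eq_dilCompGenus {F : Set G.E} (hundil : ∀ e ∈ F, ¬ dc.dilatedE e) {v z : G.V}
    (h0 : dc.excess F (G.compV F v) = 0) (hz : dc.dilatedV z) (hzC : z ∈ G.compV F v)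
    (hall : ∀ w, dc.dilatedV w → w ∈ G.compV F v → dc.dilReach z w) :
    G.compGenus F v = dc.dilCompGenus z := by
  have hmem : ∀ {u}, dc.dilReach z u → u ∈ G.compV F v := fun h =>
    Relation.ReflTransGen.trans hzC (dc.reach_of_dilReach hundil h)
  have hV : G.compV F v ∩ {u | dc.dilatedV u} = {u | dc.dilReach z u} :=
    Set.ext fun u => ⟨fun hu => hall u hu.2 hu.1, fun hu => ⟨hmem hu, dc.dilatedV_of_dilReach hz hu⟩⟩
  have hE : G.compE F v ∩ {e | dc.dilatedE e} =
      {e | dc.dilatedE e ∧ G.s e ∈ {u | dc.dilReach z u}} := by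
    ext e
    simp only [Set.mem_inter_iff, Set.mem_ofPred_eq, MetricGraph.mem_compE_iff]
    exact ⟨fun ⟨⟨_, hs⟩, he⟩ => ⟨he, hall _ (dc.dilatedV_s he) hs⟩,
      fun ⟨he, hs⟩ => ⟨⟨fun heF => hundil e heF he, hmem hs⟩, he⟩⟩
  rw [dc.compGenus_eq_excess_add, hV, hE, h0, dilCompGenus, Nat.card_coe_set_eq,
    Nat.card_coe_set_eq]
  ring

end DoubleCover

theorem isOgod_iff_components_general
    (Gt G : MetricGraph) (dc : DoubleCover Gt G)
    (F : Finset G.E)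
    (hcard : (F.card : ℤ) = Gt.genus - G.genus)
    (hundil : ∀ e ∈ F, ¬ dc.dilatedE e) :
    dc.IsOgod F ↔
      ∀ v : G.V, Xor' (dc.ogodCondDil (↑F) v) (dc.ogodCondFree (↑F) v) := by
  refine ⟨fun hogod v => ?_, fun h => ⟨hcard, hundil, fun v => ?_⟩⟩
  · have hconn := hogod.2.2
    have h0 := dc.excess_eq_zero (by rwa [Set.ncard_coe_finset]) hundil hconn v
    by_cases hdil : ∃ z ∈ G.compV F v, dc.dilatedV z
    · obtain ⟨z, hzC, hz⟩ := hdil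
      have hall : ∀ w, dc.dilatedV w → w ∈ G.compV F v → dc.dilReach z w := fun w hw hwC =>
        dc.dilReach_of_excess_eq_zero (hconn v) h0 hz hzC hw hwC
      exact Or.inl ⟨⟨z, hz, hzC, hall, dc.compGenus_eq_dilCompGenus hundil h0 hz hzC hall⟩,
        fun hfree => hfree.1 z hzC hz⟩
    · push Not at hdil
      exact Or.inr ⟨⟨hdil, fun e he hd => hdil _ he.2.1 (dc.dilatedV_s hd),
        dc.compGenus_eq_one h0 hdil, hconn v⟩, fun ⟨w, hw, hwC, _⟩ => hdil w hwC hw⟩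
  · rcases h v with ⟨⟨w, hw, hwC, -⟩, -⟩ | ⟨hfree, -⟩
    exacts [dc.hasConnPreimage_of_dilatedV hwC hw, hfree.2.2.2]

/-- **Statement 3** (Lemma 3.2).  For a dilated harmonic double cover
`π : Γ̃ → Γ` and a set `F` of `h = g(Γ̃) - g(Γ)` undilated edges, `F` is an ogod
if and only if each connected component of `Γ ∖ F` satisfies exactly one of the
two (mutually exclusive) conditions (1) and (2). -/
theorem isOgod_iff_components
    (Gt G : MetricGraph) (dc : DoubleCover Gt G)
    (hGt : Gt.Connected) (hG : G.Connected) (hdil : dc.IsDilated)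
    (F : Finset G.E)
    (hcard : (F.card : ℤ) = Gt.genus - G.genus)
    (hundil : ∀ e ∈ F, ¬ dc.dilatedE e) :
    dc.IsOgod F ↔
      ∀ v : G.V, Xor' (dc.ogodCondDil (↑F) v) (dc.ogodCondFree (↑F) v) :=
  isOgod_iff_components_general Gt G dc F hcard hundil
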